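/- (Main theorem, linear converse) Let F be any field and t,r positive integers. If an encoder matrix H ∈ F^{r×36t} with blocks H_1,…,H_36 ∈ F^{r×t} satisfies the decoding condition rank H_{{i}∪B_i^{I4}} = rank H_{B_i^{I4}} + t for every user i ∈ {1,…,36} of the instance I4, then r > 6t. Hence no linear index code over any field achieves broadcast rate 6 for I4. -/

import Mathlib

open Matrix

/-- The rank of the `r × |L|t` matrix formed by horizontally concatenating the
blocks `H l`, `l ∈ L`, of the block encoder matrix `H = [H_1 | ⋯ | H_m]`. -/
noncomputable def blockRank {F : Type} [Field F] {m r t : ℕ}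
    (H : Fin m → Matrix (Fin r) (Fin t) F) (L : Finset (Fin m)) : ℕ :=
  Matrix.rank (Matrix.of fun (k : Fin r) (p : {l // l ∈ L} × Fin t) => H p.1.1 k p.2)

/-- Side-information sets of the 10-user instance `I1` (0-based indexing). -/
def I1sideInfo : Fin 10 → Finset (Fin 10) :=
  ![{3, 5, 6}, {0, 4, 5}, {0, 1, 6}, {1, 2, 5}, {0, 2, 3}, {2, 4, 6}, {1, 3, 4}, ∅, ∅, ∅]

/-- Interfering sets of `I1`: `B_i = {1,…,10} \ (A_i ∪ {i})`. -/
def I1interf (i : Fin 10) : Finset (Fin 10) :=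
  Finset.univ \ insert i (I1sideInfo i)

/-- Interfering sets of the 26-user instance `I2` (0-based indexing). -/
def I2interf : Fin 26 → Finset (Fin 26) :=
  ![{1, 2, 4, 10, 11, 12, 14, 21, 22, 23, 24, 25},
    {0, 2, 5, 10, 11, 12, 15, 20, 21, 23, 24, 25},
    {0, 1, 3, 10, 11, 12, 13, 20, 21, 22, 23, 25},
    {4, 5, 13, 14, 15},
    {3, 5, 13, 14, 15},
    {3, 4, 13, 14, 15},
    {16},
    {0, 4, 6, 10, 14, 16, 17},
    {1, 5, 6, 11, 15, 16, 18},
    {2, 3, 6, 12, 13, 16, 19},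
    {0, 1, 2, 4, 11, 12, 14, 20, 22, 23, 24, 25},
    {0, 1, 2, 5, 10, 12, 15, 20, 21, 22, 24, 25},
    {0, 1, 2, 3, 10, 11, 13, 20, 21, 22, 23, 24},
    {3}, {4}, {5}, {6},
    {0, 4, 6, 7, 10, 14, 16},
    {1, 5, 6, 8, 11, 15, 16},
    {2, 3, 6, 9, 12, 13, 16},
    {3, 5, 13, 15, 21},
    {3, 5, 13, 15, 20},
    {3, 4, 13, 14, 23},
    {3, 4, 13, 14, 22},
    {4, 5, 14, 15, 25},
    {4, 5, 14, 15, 24}]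

/-- Interfering sets of the 36-user two-way connection `I4 = I1 ↔ I2`:
users `0,…,9` keep the interfering sets of `I1`, users `10,…,35` get the
interfering sets of `I2` shifted by `10`. -/
def I4interf (i : Fin 36) : Finset (Fin 36) :=
  if h : (i : ℕ) < 10 then
    (I1interf ⟨i, h⟩).image (Fin.castAdd 26)
  else
    (I2interf ⟨(i : ℕ) - 10, by have := i.isLt; omega⟩).image (Fin.natAdd 10)

/-!
Suppose `r ≤ 6t` and let `U i` be the column space of `H_i`. Each decoding condition says that
`U i` is `t`-dimensional and independent of the span of the users interfering with `i`.

In `I1`, users `7, 8, 9` each add `t` dimensions, so `U 0, …, U 6` span at most `3t`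
dimensions; the interfering sets then force them into the incidences of the Fano plane, which
subspaces can only realise when `2 = 0` in `F`.

In `I2`, the six mutually interfering users `10, 11, 12, 20, 21, 22` already fill the space, and
the remaining users force the pairs `U a ⊔ U b` into a non-Fano configuration: a frame, points on
its sides and a centre on the medians. In characteristic `2` this puts `U 13` inside the span of
`U 14, U 24, U 15, U 25`, none of which user `13` knows.
-/

open Module Submodule

section ModularLattice

variable {α ι : Type*} [Lattice α] [OrderBot α] [IsModularLattice α]

theorem sup_inf_sup_eq_left_of_disjoint {a b c : α} (h : Disjoint b (a ⊔ c)) :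
    (a ⊔ b) ⊓ (a ⊔ c) = a := by
  rw [sup_inf_assoc_of_le _ le_sup_left, h.eq_bot, sup_bot_eq]

theorem disjoint_sup_of_le_sup {a b c d e : α} (h : Disjoint d (a ⊔ e)) (hb : b ≤ d ⊔ a)
    (hc : c ≤ a ⊔ e) (hab : Disjoint a b) (hac : Disjoint a c) : Disjoint a (b ⊔ c) := by
  have hcb : Disjoint (a ⊔ c) b := by
    rw [disjoint_iff_inf_le]
    calc (a ⊔ c) ⊓ b ≤ (a ⊔ d) ⊓ (a ⊔ e) ⊓ b :=
          le_inf (le_inf (inf_le_right.trans (hb.trans_eq (sup_comm d a)))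
            (inf_le_left.trans (sup_le le_sup_left hc))) inf_le_right
      _ = ⊥ := by rw [sup_inf_sup_eq_left_of_disjoint h, hab.eq_bot]
  rw [sup_comm]
  exact hac.disjoint_sup_right_of_disjoint_sup_left hcb

namespace Finset.SupIndep

variable [DecidableEq ι] {s : Finset ι} {f : ι → α}

theorem sup_inf_sup (hs : s.SupIndep f) {u v : Finset ι} (hu : u ⊆ s) (hv : v ⊆ s) :
    u.sup f ⊓ v.sup f = (u ∩ v).sup f := by
  have hu' : (u ∩ v) ∪ (u \ v) = u := by rw [Finset.union_comm, Finset.sdiff_union_inter]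
  have hv' : (u ∩ v) ∪ (v \ u) = v := by
    rw [Finset.union_comm, Finset.inter_comm, Finset.sdiff_union_inter]
  have h : Disjoint ((u \ v).sup f) ((u ∩ v).sup f ⊔ (v \ u).sup f) := by
    rw [← Finset.sup_union, hv']
    exact hs.disjoint_sup_sup (Finset.sdiff_subset.trans hu) hv Finset.sdiff_disjoint
  calc u.sup f ⊓ v.sup f = ((u ∩ v) ∪ (u \ v)).sup f ⊓ ((u ∩ v) ∪ (v \ u)).sup f := by
        rw [hu', hv']
    _ = (u ∩ v).sup f := by
        rw [Finset.sup_union, Finset.sup_union]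
        exact sup_inf_sup_eq_left_of_disjoint h

theorem le_sup_sdiff (hs : s.SupIndep f) {r : Finset ι} {x : α} (hx : x ≤ s.sup f)
    (hr : ∀ i ∈ r, x ≤ (s.erase i).sup f) : x ≤ (s \ r).sup f := by
  induction r using Finset.induction_on with
  | empty => simpa using hx
  | insert i r _ ih =>
    have h := le_inf (ih fun j hj ↦ hr j (Finset.mem_insert_of_mem hj))
      (hr i (Finset.mem_insert_self i r))
    rw [hs.sup_inf_sup Finset.sdiff_subset (Finset.erase_subset i s)] at h
    convert h using 2
    ext j
    simp only [Finset.mem_sdiff, Finset.mem_insert, Finset.mem_inter, Finset.mem_erase]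
    tauto

end Finset.SupIndep

end ModularLattice

theorem Submodule.mem_of_add_mem_sup {R M : Type*} [Ring R] [AddCommGroup M] [Module R M]
    {P Q W : Submodule R M} (hPQ : Disjoint P Q) (hW : W ≤ P) {p q : M} (hp : p ∈ P) (hq : q ∈ Q)
    (h : p + q ∈ W ⊔ Q) : p ∈ W := by
  obtain ⟨w, hw, q', hq', hwq⟩ := mem_sup.1 h
  have hpw : p - w = q' - q := by rw [sub_eq_sub_iff_add_eq_add, ← hwq, add_comm]
  have : p - w = 0 :=
    disjoint_def.1 hPQ _ (sub_mem hp (hW hw)) (hpw ▸ sub_mem hq' hq)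
  rwa [sub_eq_zero.1 this]

section Configurations

variable {K V : Type*} [DivisionRing K] [AddCommGroup V] [Module K V]

/-- The Fano plane: a frame `V₀, V₁, V₂`, points `V₃, V₄, V₅` on its sides, a centre `V₆` on the
three medians, and `V₃, V₄, V₅` collinear. Writing a vector of `V₆` as `a₀ + a₁ + a₂` along the
frame, the medians put `a₀ + a₁ ∈ V₃`, `a₁ + a₂ ∈ V₄`, `a₀ + a₂ ∈ V₅`, and then collinearity
puts `2 • a₁` in `V₁ ⊓ (V₃ ⊔ V₄) = ⊥`. -/
theorem two_eq_zero_of_fano {V₀ V₁ V₂ V₃ V₄ V₅ V₆ : Submodule K V}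
    (h₀ : Disjoint V₀ (V₁ ⊔ V₂)) (h₁₂ : Disjoint V₁ V₂)
    (h₀₁₃ : V₃ ≤ V₀ ⊔ V₁) (h₁₂₄ : V₄ ≤ V₁ ⊔ V₂) (h₀₂₅ : V₅ ≤ V₀ ⊔ V₂)
    (h₂₃₆ : V₆ ≤ V₂ ⊔ V₃) (h₀₄₆ : V₆ ≤ V₀ ⊔ V₄) (h₁₅₆ : V₆ ≤ V₁ ⊔ V₅) (h₃₄₅ : V₅ ≤ V₃ ⊔ V₄)
    (h₀₃ : Disjoint V₀ V₃) (h₁₃ : Disjoint V₁ V₃) (h₁₄ : Disjoint V₁ V₄) (h₂₄ : Disjoint V₂ V₄)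
    (h₆ : V₆ ≠ ⊥) : (2 : K) = 0 := by
  obtain ⟨v, hv, hv₀⟩ := (Submodule.ne_bot_iff V₆).1 h₆
  obtain ⟨a₂, ha₂, p, hp, rfl⟩ := mem_sup.1 (h₂₃₆ hv)
  obtain ⟨a₀, ha₀, a₁, ha₁, rfl⟩ := mem_sup.1 (h₀₁₃ hp)
  have h₄ : a₁ + a₂ ∈ V₄ := by
    refine mem_of_add_mem_sup h₀.symm h₁₂₄ (add_mem_sup ha₁ ha₂) ha₀ ?_
    rw [sup_comm]
    convert h₀₄₆ hv using 1
    abel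
  have h₅ : a₀ + a₂ ∈ V₅ := by
    refine mem_of_add_mem_sup (h₁₂.symm.disjoint_sup_left_of_disjoint_sup_right
      (sup_comm V₁ V₂ ▸ h₀)) h₀₂₅ (add_mem_sup ha₀ ha₂) ha₁ ?_
    rw [sup_comm]
    convert h₁₅₆ hv using 1
    abel
  have h₁₃₄ : Disjoint V₁ (V₃ ⊔ V₄) := disjoint_sup_of_le_sup h₀ h₀₁₃ h₁₂₄ h₁₃ h₁₄
  have h₂a₁ : (2 : K) • a₁ = 0 := by
    refine disjoint_def.1 h₁₃₄ _ (smul_mem _ _ ha₁) ?_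
    obtain ⟨p₃, hp₃, p₄, hp₄, hsum⟩ := mem_sup.1 (h₃₄₅ h₅)
    have : (2 : K) • a₁ = ((a₀ + a₁) - p₃) + ((a₁ + a₂) - p₄) := by
      rw [two_smul, eq_sub_of_add_eq' hsum]
      abel
    rw [this]
    exact add_mem_sup (sub_mem hp hp₃) (sub_mem h₄ hp₄)
  have ha₁₀ : a₁ ≠ 0 := by
    rintro rfl
    have : a₀ = 0 := disjoint_def.1 h₀₃ _ ha₀ (by simpa using hp)
    have : a₂ = 0 := disjoint_def.1 h₂₄ _ ha₂ (by simpa using h₄)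
    simp_all
  exact (smul_eq_zero.1 h₂a₁).resolve_right ha₁₀

/-- A frame `A₀, A₁, A₂`, points `Y, Z` on two of its sides and a centre `G` on the medians
through them. A vector `b₀ + b₁ + b₂` of `G` has `b₁ + b₂ ∈ Y` and `b₀ + b₂ ∈ Z`, whose sum is
`b₀ + b₁` in characteristic `2`; so whatever the third median `A₂ ⊔ G` meets on the third side
lies on `Y ⊔ Z`. -/
theorem le_sup_of_two_eq_zero (h2 : (2 : K) = 0) {A₀ A₁ A₂ X Y Z G : Submodule K V}
    (h₀ : Disjoint A₀ (A₁ ⊔ A₂)) (h₁₂ : Disjoint A₁ A₂)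
    (hY : Y ≤ A₁ ⊔ A₂) (hZ : Z ≤ A₀ ⊔ A₂) (hGY : G ≤ A₀ ⊔ Y) (hGZ : G ≤ A₁ ⊔ Z)
    (hX : X ≤ A₀ ⊔ A₁) (hXG : X ≤ A₂ ⊔ G) : X ≤ Y ⊔ Z := by
  intro x hx
  obtain ⟨c, hc, g, hg, rfl⟩ := mem_sup.1 (hXG hx)
  obtain ⟨b₀, hb₀, y, hy, rfl⟩ := mem_sup.1 (hGY hg)
  obtain ⟨b₁, hb₁, b₂, hb₂, rfl⟩ := mem_sup.1 (hY hy)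
  have hz : b₀ + b₂ ∈ Z := by
    refine mem_of_add_mem_sup (h₁₂.symm.disjoint_sup_left_of_disjoint_sup_right
      (sup_comm A₁ A₂ ▸ h₀)) hZ (add_mem_sup hb₀ hb₂) hb₁ ?_
    rw [sup_comm]
    convert hGZ hg using 1
    abel
  have hcb : c + b₂ = 0 := by
    refine disjoint_def.1 (h₁₂.disjoint_sup_left_of_disjoint_sup_right h₀) _ ?_ (add_mem hc hb₂)
    have : c + b₂ = (c + (b₀ + (b₁ + b₂))) - (b₀ + b₁) := by abel
    rw [this]
    exact sub_mem (hX hx) (add_mem_sup hb₀ hb₁)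
  have : c + (b₀ + (b₁ + b₂)) = (b₁ + b₂) + (b₀ + b₂) + (c + b₂) - (2 : K) • b₂ := by
    rw [two_smul]
    abel
  rw [this, hcb, h2, zero_smul, add_zero, sub_zero]
  exact add_mem_sup hy hz

end Configurations

section IndexCoding

variable {K V ι : Type*} [DivisionRing K] [AddCommGroup V] [Module K V] [FiniteDimensional K V]

theorem Submodule.finrank_sup_of_disjoint {P Q : Submodule K V} (h : Disjoint P Q) :
    finrank K ↥(P ⊔ Q) = finrank K P + finrank K Q := by
  rw [← finrank_sup_add_finrank_inf_eq, h.eq_bot, finrank_bot, add_zero]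

/-- The decoding conditions of a linear index code with `t`-dimensional messages, read on the
column spaces: `U i` is spanned by the columns of the encoder block of user `i`, and `B i` is
the interfering set of user `i`. -/
structure IsDecodable (B : ι → Finset ι) (U : ι → Submodule K V) (t : ℕ) : Prop where
  finrank_le : ∀ i, finrank K (U i) ≤ t
  finrank_sup : ∀ i, finrank K ↥(U i ⊔ (B i).sup U) = finrank K ↥((B i).sup U) + t

namespace IsDecodable

variable {B : ι → Finset ι} {U : ι → Submodule K V} {t : ℕ}

theorem finrank_inf_add_eq (hD : IsDecodable B U t) (i : ι) :
    finrank K ↥(U i ⊓ (B i).sup U) + t = finrank K (U i) := by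
  have h := finrank_sup_add_finrank_inf_eq (U i) ((B i).sup U)
  rw [hD.finrank_sup i] at h
  omega

theorem finrank_eq (hD : IsDecodable B U t) (i : ι) : finrank K (U i) = t := by
  have := hD.finrank_inf_add_eq i
  have := hD.finrank_le i
  omega

theorem finrank_sup_eq_two_mul (hD : IsDecodable B U t) {i j : ι}
    (h : Disjoint (U i) (U j)) : finrank K ↥(U i ⊔ U j) = 2 * t := by
  rw [Submodule.finrank_sup_of_disjoint h, hD.finrank_eq, hD.finrank_eq, two_mul]

theorem ne_bot (hD : IsDecodable B U t) (ht : 0 < t) (i : ι) : U i ≠ ⊥ := by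
  intro h
  have := hD.finrank_eq i
  rw [h, finrank_bot] at this
  omega

theorem finrank_sup_add_le (hD : IsDecodable B U t) (i : ι) :
    finrank K ↥((B i).sup U) + t ≤ finrank K V :=
  hD.finrank_sup i ▸ Submodule.finrank_le _

theorem disjoint (hD : IsDecodable B U t) {i : ι} {S : Finset ι} (hS : S ⊆ B i) :
    Disjoint (U i) (S.sup U) := by
  refine Disjoint.mono_right (Finset.sup_mono hS) ?_
  rw [disjoint_iff, ← Submodule.finrank_eq_zero]
  have := hD.finrank_inf_add_eq i
  have := hD.finrank_le i
  omega

theorem disjoint_of_mem (hD : IsDecodable B U t) {i j : ι} (h : j ∈ B i) :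
    Disjoint (U i) (U j) := by
  simpa using hD.disjoint (Finset.singleton_subset_iff.2 h)

variable [DecidableEq ι]

theorem finrank_sup_insert (hD : IsDecodable B U t) {i : ι} {S : Finset ι} (hS : S ⊆ B i) :
    finrank K ↥((insert i S).sup U) = finrank K ↥(S.sup U) + t := by
  rw [Finset.sup_insert, Submodule.finrank_sup_of_disjoint (hD.disjoint hS), hD.finrank_eq,
    add_comm]

theorem sup_le_sup_of_insert_subset (hD : IsDecodable B U t) {i j : ι} {S P T : Finset ι}
    (hjS : insert j S ⊆ B i) (hS : S ⊆ B j) (hP : P ⊆ S) (hT : T ⊆ S)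
    (hPdim : finrank K V ≤ finrank K ↥(P.sup U) + 2 * t) : T.sup U ≤ P.sup U := by
  have h₁ := hD.finrank_sup_insert hS
  have h₂ := Submodule.finrank_mono (Finset.sup_mono (f := U) hjS)
  have h₃ := hD.finrank_sup_add_le i
  have heq : P.sup U = S.sup U := Submodule.eq_of_le_of_finrank_le (Finset.sup_mono hP) (by omega)
  rw [heq]
  exact Finset.sup_mono hT

/-- `U i` adds `t` dimensions to the span of `a, b, c` inside a `3t`-dimensional space, so that
span is only `2t`-dimensional. -/
theorem le_sup_of_finrank_le (hD : IsDecodable B U t) {S : Finset ι}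
    (hS : finrank K ↥(S.sup U) ≤ 3 * t) {i a b c : ι} (hi : i ∈ S) (hsub : {a, b, c} ⊆ S)
    (habc : {a, b, c} ⊆ B i) (hab : Disjoint (U a) (U b)) : U c ≤ U a ⊔ U b := by
  have h₁ := hD.finrank_sup_insert habc
  have h₂ := (Submodule.finrank_mono (Finset.sup_mono (f := U)
    (Finset.insert_subset hi hsub))).trans hS
  have hle : U a ⊔ U b ≤ ({a, b, c} : Finset ι).sup U := by simp [le_sup_of_le_right]
  have h₃ := hD.finrank_sup_eq_two_mul hab
  have heq := Submodule.eq_of_le_of_finrank_le hle (by omega)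
  rw [heq]
  exact Finset.le_sup (by simp)

theorem supIndep (hD : IsDecodable B U t) {S : Finset ι} (hS : ∀ i ∈ S, S.erase i ⊆ B i) :
    S.SupIndep U :=
  Finset.supIndep_iff_disjoint_erase.2 fun i hi ↦ hD.disjoint (hS i hi)

theorem finrank_sup_eq_card_mul (hD : IsDecodable B U t) {S : Finset ι}
    (hS : ∀ i ∈ S, S.erase i ⊆ B i) : finrank K ↥(S.sup U) = S.card * t := by
  induction S using Finset.induction_on with
  | empty => simp
  | insert a S ha ih =>
    have hSa : S ⊆ B a := by simpa [Finset.erase_insert ha] using hS a (Finset.mem_insert_self a S)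
    have hS' : ∀ i ∈ S, S.erase i ⊆ B i := fun i hi ↦
      (Finset.erase_subset_erase i (Finset.subset_insert a S)).trans
        (hS i (Finset.mem_insert_of_mem hi))
    rw [hD.finrank_sup_insert hSa, ih hS', Finset.card_insert_of_notMem ha, add_one_mul]

theorem sup_eq_sup_erase (hD : IsDecodable B U t) {S : Finset ι}
    (hS : ∀ i ∈ S, S.erase i ⊆ B i) (hV : finrank K V ≤ S.card * t) {i : ι} (hi : i ∈ S) :
    (B i).sup U = (S.erase i).sup U := by
  have hS' : ∀ j ∈ S.erase i, (S.erase i).erase j ⊆ B j := fun j hj ↦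
    (Finset.erase_subset_erase j (Finset.erase_subset i S)).trans
      (hS j (Finset.mem_of_mem_erase hj))
  refine (Submodule.eq_of_le_of_finrank_le (Finset.sup_mono (hS i hi)) ?_).symm
  have h₁ := hD.finrank_sup_add_le i
  rw [hD.finrank_sup_eq_card_mul hS', Finset.card_erase_of_mem hi]
  have h₂ : (S.card - 1) * t + t = S.card * t := by
    rw [← add_one_mul, Nat.sub_add_cancel (Finset.one_le_card.2 ⟨i, hi⟩)]
  omega

theorem sup_le_sup_sdiff (hD : IsDecodable B U t) {S : Finset ι}
    (hS : ∀ i ∈ S, S.erase i ⊆ B i) (hV : finrank K V ≤ S.card * t) {R T : Finset ι}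
    (hR : R ⊆ S) (hRne : R.Nonempty) (hT : ∀ j ∈ T, ∀ i ∈ R, j ∈ B i) :
    T.sup U ≤ (S \ R).sup U := by
  have hle : ∀ i ∈ R, T.sup U ≤ (S.erase i).sup U := fun i hi ↦ by
    rw [← hD.sup_eq_sup_erase hS hV (hR hi)]
    exact Finset.sup_le fun j hj ↦ Finset.le_sup (hT j hj i hi)
  obtain ⟨i, hi⟩ := hRne
  exact (hD.supIndep hS).le_sup_sdiff
    ((hle i hi).trans (Finset.sup_mono (Finset.erase_subset i S))) hle

end IsDecodable

end IndexCoding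

namespace I4

variable {K V : Type*} [DivisionRing K] [AddCommGroup V] [Module K V] [FiniteDimensional K V]
  {U : Fin 36 → Submodule K V} {t : ℕ}

theorem finrank_sup_fano_le (hD : IsDecodable I4interf U t) (hV : finrank K V ≤ 6 * t) :
    finrank K ↥(({0, 1, 2, 3, 4, 5, 6} : Finset (Fin 36)).sup U) ≤ 3 * t := by
  have h₉ := hD.finrank_sup_insert (i := 9) (S := {0, 1, 2, 3, 4, 5, 6}) (by decide)
  have h₈ := hD.finrank_sup_insert (i := 8) (S := insert 9 {0, 1, 2, 3, 4, 5, 6}) (by decide)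
  have h₇ := hD.finrank_sup_insert (i := 7) (S := insert 8 (insert 9 {0, 1, 2, 3, 4, 5, 6}))
    (by decide)
  have := Submodule.finrank_le
    ((insert 7 (insert 8 (insert 9 ({0, 1, 2, 3, 4, 5, 6} : Finset (Fin 36))))).sup U)
  omega

theorem two_eq_zero (hD : IsDecodable I4interf U t) (hV : finrank K V ≤ 6 * t) (ht : 0 < t) :
    (2 : K) = 0 := by
  have hS := finrank_sup_fano_le hD hV
  exact two_eq_zero_of_fano (V₀ := U 0) (V₁ := U 1) (V₂ := U 2) (V₃ := U 3) (V₄ := U 4)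
    (V₅ := U 5) (V₆ := U 6)
    (by simpa using hD.disjoint (i := 0) (S := {1, 2}) (by decide))
    (hD.disjoint_of_mem (by decide))
    (hD.le_sup_of_finrank_le hS (i := 5) (by decide) (by decide) (by decide)
      (hD.disjoint_of_mem (by decide)))
    (hD.le_sup_of_finrank_le hS (i := 0) (by decide) (by decide) (by decide)
      (hD.disjoint_of_mem (by decide)))
    (hD.le_sup_of_finrank_le hS (i := 6) (by decide) (by decide) (by decide)
      (hD.disjoint_of_mem (by decide)))
    (hD.le_sup_of_finrank_le hS (i := 1) (by decide) (by decide) (by decide)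
      (hD.disjoint_of_mem (by decide)))
    (hD.le_sup_of_finrank_le hS (i := 3) (by decide) (by decide) (by decide)
      (hD.disjoint_of_mem (by decide)))
    (hD.le_sup_of_finrank_le hS (i := 4) (by decide) (by decide) (by decide)
      (hD.disjoint_of_mem (by decide)).symm)
    (hD.le_sup_of_finrank_le hS (i := 2) (by decide) (by decide) (by decide)
      (hD.disjoint_of_mem (by decide)))
    (hD.disjoint_of_mem (by decide)).symm (hD.disjoint_of_mem (by decide))
    (hD.disjoint_of_mem (by decide)).symm (hD.disjoint_of_mem (by decide)) (hD.ne_bot ht 6)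

theorem frame_disjoint (hD : IsDecodable I4interf U t) :
    Disjoint (U 10 ⊔ U 20) ((U 11 ⊔ U 21) ⊔ (U 12 ⊔ U 22)) ∧
      Disjoint (U 11 ⊔ U 21) (U 12 ⊔ U 22) ∧
      Disjoint (U 11 ⊔ U 21) ((U 10 ⊔ U 20) ⊔ (U 12 ⊔ U 22)) := by
  have h := hD.supIndep (S := {10, 11, 12, 20, 21, 22}) (by decide)
  refine ⟨?_, ?_, ?_⟩
  · simpa [sup_assoc] using
      h.disjoint_sup_sup (u := {10, 20}) (v := {11, 21, 12, 22}) (by decide) (by decide) (by decide)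
  · simpa [sup_assoc] using
      h.disjoint_sup_sup (u := {11, 21}) (v := {12, 22}) (by decide) (by decide) (by decide)
  · simpa [sup_assoc] using
      h.disjoint_sup_sup (u := {11, 21}) (v := {10, 20, 12, 22}) (by decide) (by decide) (by decide)

theorem sup_le_sup_of_sdiff (hD : IsDecodable I4interf U t) (hV : finrank K V ≤ 6 * t)
    {R P T : Finset (Fin 36)} (hR : R ⊆ {10, 11, 12, 20, 21, 22}) (hRne : R.Nonempty)
    (hP : {10, 11, 12, 20, 21, 22} \ R = P) (hT : ∀ j ∈ T, ∀ i ∈ R, j ∈ I4interf i) :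
    T.sup U ≤ P.sup U :=
  hP ▸ hD.sup_le_sup_sdiff (by decide) (by simpa using hV) hR hRne hT

theorem sides_le (hD : IsDecodable I4interf U t) (hV : finrank K V ≤ 6 * t) :
    U 14 ⊔ U 24 ≤ (U 11 ⊔ U 21) ⊔ (U 12 ⊔ U 22) ∧
      U 15 ⊔ U 25 ≤ (U 10 ⊔ U 20) ⊔ (U 12 ⊔ U 22) ∧
      U 13 ≤ (U 10 ⊔ U 20) ⊔ (U 11 ⊔ U 21) := by
  refine ⟨?_, ?_, ?_⟩
  · simpa [sup_assoc] using sup_le_sup_of_sdiff hD hV (R := {10, 20}) (P := {11, 21, 12, 22})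
      (T := {14, 24}) (by decide) (by decide) (by decide) (by decide)
  · simpa [sup_assoc] using sup_le_sup_of_sdiff hD hV (R := {11, 21}) (P := {10, 20, 12, 22})
      (T := {15, 25}) (by decide) (by decide) (by decide) (by decide)
  · simpa [sup_assoc] using sup_le_sup_of_sdiff hD hV (R := {12, 22}) (P := {10, 20, 11, 21})
      (T := {13}) (by decide) (by decide) (by decide) (by decide)

/-- Users `34, 35` are forced to carry the spaces of users `12, 22`, and `15, 25` lie in their
interfering sets. -/
theorem side_disjoint (hD : IsDecodable I4interf U t) (hV : finrank K V ≤ 6 * t) :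
    Disjoint (U 12 ⊔ U 22) (U 15 ⊔ U 25) := by
  have h₃₄ : U 34 = U 12 := by
    refine Submodule.eq_of_le_of_finrank_le ?_ (by rw [hD.finrank_eq, hD.finrank_eq])
    simpa using sup_le_sup_of_sdiff hD hV (R := {10, 11, 20, 21, 22}) (P := {12})
      (T := {34}) (by decide) (by decide) (by decide) (by decide)
  have h₃₅ : U 35 = U 22 := by
    refine Submodule.eq_of_le_of_finrank_le ?_ (by rw [hD.finrank_eq, hD.finrank_eq])
    simpa using sup_le_sup_of_sdiff hD hV (R := {10, 11, 12, 20, 21}) (P := {22})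
      (T := {35}) (by decide) (by decide) (by decide) (by decide)
  have h₁₂ : Disjoint (U 12) (U 22 ⊔ (U 15 ⊔ U 25)) := by
    simpa [h₃₄, h₃₅] using hD.disjoint (i := 34) (S := {35, 15, 25}) (by decide)
  have h₂₂ : Disjoint (U 22) (U 15 ⊔ U 25) := by
    simpa [h₃₅] using hD.disjoint (i := 35) (S := {15, 25}) (by decide)
  exact h₂₂.disjoint_sup_left_of_disjoint_sup_right h₁₂

theorem sup_le_of_insert_subset (hD : IsDecodable I4interf U t) (hV : finrank K V ≤ 6 * t)
    {i j a b c d e f : Fin 36} (hjS : insert j {a, b, c, d, e, f} ⊆ I4interf i)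
    (hS : {a, b, c, d, e, f} ⊆ I4interf j) (hab : Disjoint (U a) (U b))
    (hcd : Disjoint (U c) (U d)) (h : Disjoint (U a ⊔ U b) (U c ⊔ U d)) :
    U e ⊔ U f ≤ (U a ⊔ U b) ⊔ (U c ⊔ U d) := by
  have hP : ({a, b, c, d} : Finset (Fin 36)).sup U = (U a ⊔ U b) ⊔ (U c ⊔ U d) := by
    simp [sup_assoc]
  have := hD.sup_le_sup_of_insert_subset (P := {a, b, c, d}) (T := {e, f}) hjS hS
    (by simp [Finset.insert_subset_iff]) (by simp [Finset.insert_subset_iff]) (by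
      rw [hP, Submodule.finrank_sup_of_disjoint h, hD.finrank_sup_eq_two_mul hab,
        hD.finrank_sup_eq_two_mul hcd]
      omega)
  simpa [hP] using this

theorem false_of_two_eq_zero (hD : IsDecodable I4interf U t) (hV : finrank K V ≤ 6 * t)
    (ht : 0 < t) (h2 : (2 : K) = 0) : False := by
  obtain ⟨h₀, h₁₂, h₁⟩ := frame_disjoint hD
  obtain ⟨hY, hZ, hX⟩ := sides_le hD hV
  have hGY : U 16 ⊔ U 26 ≤ (U 10 ⊔ U 20) ⊔ (U 14 ⊔ U 24) :=
    sup_le_of_insert_subset hD hV (i := 17) (j := 27) (by decide) (by decide)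
      (hD.disjoint_of_mem (by decide)) (hD.disjoint_of_mem (by decide)) (h₀.mono_right hY)
  have hGZ : U 16 ⊔ U 26 ≤ (U 11 ⊔ U 21) ⊔ (U 15 ⊔ U 25) :=
    sup_le_of_insert_subset hD hV (i := 18) (j := 28) (by decide) (by decide)
      (hD.disjoint_of_mem (by decide)) (hD.disjoint_of_mem (by decide)) (h₁.mono_right hZ)
  have hA₂G : Disjoint (U 12 ⊔ U 22) (U 16 ⊔ U 26) := by
    refine Disjoint.mono_right (hGZ.trans_eq (sup_comm _ _)) ?_
    exact (side_disjoint hD hV).disjoint_sup_right_of_disjoint_sup_left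
      (h₁.symm.mono_left (sup_le le_sup_right hZ))
  have hXG : U 13 ⊔ U 23 ≤ (U 12 ⊔ U 22) ⊔ (U 16 ⊔ U 26) :=
    sup_le_of_insert_subset hD hV (i := 19) (j := 29) (by decide) (by decide)
      (hD.disjoint_of_mem (by decide)) (hD.disjoint_of_mem (by decide)) hA₂G
  have hXYZ := le_sup_of_two_eq_zero h2 h₀ h₁₂ hY hZ hGY hGZ hX (le_sup_left.trans hXG)
  have hdisj : Disjoint (U 13) ((U 14 ⊔ U 24) ⊔ (U 15 ⊔ U 25)) := by
    simpa [sup_assoc] using hD.disjoint (i := 13) (S := {14, 24, 15, 25}) (by decide)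
  exact hD.ne_bot ht 13 (hdisj.eq_bot_of_le hXYZ)

end I4

section BlockMatrix

variable {F : Type} [Field F] {m r t : ℕ}

theorem blockRank_eq_finrank_sup (H : Fin m → Matrix (Fin r) (Fin t) F) (L : Finset (Fin m)) :
    blockRank H L = finrank F ↥(L.sup fun l ↦ span F (Set.range (H l).col)) := by
  have hcols : Set.range (Matrix.of fun k (p : {l // l ∈ L} × Fin t) ↦ H p.1 k p.2).col =
      ⋃ l ∈ L, Set.range (H l).col := by
    ext v
    constructor
    · rintro ⟨⟨⟨l, hl⟩, j⟩, rfl⟩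
      exact Set.mem_biUnion hl ⟨j, rfl⟩
    · intro hv
      obtain ⟨l, hl, j, rfl⟩ := Set.mem_iUnion₂.1 hv
      exact ⟨(⟨l, hl⟩, j), rfl⟩
  rw [blockRank, rank_eq_finrank_span_cols, hcols, span_iUnion₂, Finset.sup_eq_iSup]

theorem isDecodable_of_blockRank (B : Fin m → Finset (Fin m))
    (H : Fin m → Matrix (Fin r) (Fin t) F)
    (hdec : ∀ i, blockRank H (insert i (B i)) = blockRank H (B i) + t) :
    IsDecodable B (fun i ↦ span F (Set.range (H i).col)) t where
  finrank_le i := (rank_eq_finrank_span_cols (H i)) ▸ rank_le_width (H i)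
  finrank_sup i := by
    have h := hdec i
    rwa [blockRank_eq_finrank_sup, blockRank_eq_finrank_sup, Finset.sup_insert] at h

end BlockMatrix

theorem stmt15_general {F : Type} [Field F] (t r : ℕ) (ht : 0 < t)
    (H : Fin 36 → Matrix (Fin r) (Fin t) F)
    (hdec : ∀ i : Fin 36,
      blockRank H (insert i (I4interf i)) = blockRank H (I4interf i) + t) :
    6 * t < r := by
  by_contra! hr
  have hD := isDecodable_of_blockRank I4interf H hdec
  have hV : finrank F (Fin r → F) ≤ 6 * t := by simpa using hr
  exact I4.false_of_two_eq_zero hD hV ht (I4.two_eq_zero hD hV ht)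

theorem stmt15 {F : Type} [Field F] (t r : ℕ) (ht : 0 < t) (hr : 0 < r)
    (H : Fin 36 → Matrix (Fin r) (Fin t) F)
    (hdec : ∀ i : Fin 36,
      blockRank H (insert i (I4interf i)) = blockRank H (I4interf i) + t) :
    6 * t < r :=
  stmt15_general t r ht H hdec
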